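/- arXiv:2502.19921 — 2 statements merged into one kernel-verified Lean document; each statement's English description precedes it below -/
import Mathlib

section
/- Let T > 0, let f : AddCircle T → ℂ be integrable with c₁(f) ≠ 0, and let φ : ℝ. Then the first Fourier coefficient of the transformed signal satisfies fourierCoeff (𝒯(f,φ)) 1 = (‖c₁(f)‖ : ℂ) · Complex.exp(φ·i); in particular it has modulus ‖c₁(f)‖ and its argument is congruent to φ modulo 2π, so the transformation matches the phase angle of the harmonic at frequency ω₁ = 2π/T with the desired angle φ. -/
/-! Translating `f` by `d` multiplies its `n`-th Fourier coefficient by `fourier (-n) d`.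
The two branches of `Δφ` agree modulo the period `T`, so translating by `Δφ` multiplies `c₁` by
`exp (-iθ)`, and `θ ≡ arg c₁ - φ (mod 2π)` turns `c₁ = ‖c₁‖ exp (i arg c₁)` into `‖c₁‖ exp (iφ)`. -/

open MeasureTheory

/-- `theta T f φ` is the representative in `[0, 2π)` of `arg (c₁ f) − φ` modulo `2π`. -/
noncomputable def theta (T : ℝ) [Fact (0 < T)] (f : AddCircle T → ℂ) (φ : ℝ) : ℝ :=
  toIcoMod Real.two_pi_pos 0 (Complex.arg (fourierCoeff f 1) - φ)

/-- The computed time-shift amount `Δφ(f, φ)`. -/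
noncomputable def deltaPhi (T : ℝ) [Fact (0 < T)] (f : AddCircle T → ℂ) (φ : ℝ) : ℝ :=
  if theta T f φ > Real.pi then (theta T f φ - 2 * Real.pi) * T / (2 * Real.pi)
  else theta T f φ * T / (2 * Real.pi)

/-- The transformation `𝒯(f, φ)`: circularly shift `f` by `Δφ(f, φ)`. -/
noncomputable def transf (T : ℝ) [Fact (0 < T)] (f : AddCircle T → ℂ) (φ : ℝ) :
    AddCircle T → ℂ :=
  fun x => f (x - (deltaPhi T f φ : AddCircle T))

open AddCircle Complex

theorem fourier_add_right {T : ℝ} (n : ℤ) (x d : AddCircle T) :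
    fourier n (x + d) = fourier n x * fourier n d := by
  simp only [fourier_apply, smul_add, toCircle_add, Circle.coe_mul]

theorem fourierCoeff_comp_sub_const {T : ℝ} [Fact (0 < T)] {E : Type*} [NormedAddCommGroup E]
    [NormedSpace ℂ E] (f : AddCircle T → E) (d : AddCircle T) (n : ℤ) :
    fourierCoeff (fun x => f (x - d)) n = fourier (-n) d • fourierCoeff f n := by
  rw [fourierCoeff, ← integral_add_right_eq_self _ d, fourierCoeff, ← integral_smul]
  simp only [add_sub_cancel_right, fourier_add_right, mul_smul, smul_comm (fourier (-n) d)]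

theorem fourier_coe_mul_period_div_two_pi {T : ℝ} [Fact (0 < T)] (n : ℤ) (θ : ℝ) :
    fourier n ((θ * T / (2 * Real.pi) : ℝ) : AddCircle T) = exp (θ * I) ^ n := by
  have hT : (T : ℂ) ≠ 0 := ofReal_ne_zero.2 (Fact.out : 0 < T).ne'
  have hπ : (Real.pi : ℂ) ≠ 0 := ofReal_ne_zero.2 Real.pi_ne_zero
  rw [fourier_coe_apply, ← exp_int_mul]
  congr 1
  push_cast
  field_simp

theorem exp_toIcoMod_two_pi_mul_I (a x : ℝ) :
    exp (toIcoMod Real.two_pi_pos a x * I) = exp (x * I) := by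
  rw [← self_sub_toIcoDiv_zsmul, ofReal_sub, ofReal_zsmul, ofReal_mul, ofReal_ofNat,
    exp_mul_I_periodic.sub_zsmul_eq]

theorem exp_sub_arg_mul_I_mul_self (z : ℂ) (φ : ℝ) :
    exp ((φ - z.arg) * I) * z = ‖z‖ * exp (φ * I) := by
  nth_rewrite 2 [← norm_mul_exp_arg_mul_I z]
  rw [mul_left_comm, ← exp_add]
  ring_nf

theorem coe_deltaPhi (T : ℝ) [Fact (0 < T)] (f : AddCircle T → ℂ) (φ : ℝ) :
    (deltaPhi T f φ : AddCircle T) = ((theta T f φ * T / (2 * Real.pi) : ℝ) : AddCircle T) := by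
  unfold deltaPhi
  split_ifs
  · rw [sub_mul, sub_div, mul_div_cancel_left₀ T Real.two_pi_pos.ne', coe_sub, coe_period,
      sub_zero]
  · rfl

theorem fourierCoeff_one_transf_general (T : ℝ) [Fact (0 < T)] (f : AddCircle T → ℂ) (φ : ℝ) :
    fourierCoeff (transf T f φ) 1 =
      (‖fourierCoeff f 1‖ : ℂ) * Complex.exp ((φ : ℂ) * Complex.I) := by
  unfold transf
  rw [fourierCoeff_comp_sub_const, coe_deltaPhi, fourier_coe_mul_period_div_two_pi,
    theta, exp_toIcoMod_two_pi_mul_I, zpow_neg_one, ← exp_neg, smul_eq_mul,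
    ← exp_sub_arg_mul_I_mul_self]
  congr 2
  push_cast
  ring

/-- The transformation matches the phase angle of the first harmonic with the desired
angle `φ`: the first Fourier coefficient of `𝒯(f, φ)` equals `‖c₁ f‖ · exp (φ i)`. -/
theorem fourierCoeff_one_transf (T : ℝ) [Fact (0 < T)] (f : AddCircle T → ℂ)
    (hf : Integrable f AddCircle.haarAddCircle) (hc : fourierCoeff f 1 ≠ 0) (φ : ℝ) :
    fourierCoeff (transf T f φ) 1 =
      (‖fourierCoeff f 1‖ : ℂ) * Complex.exp ((φ : ℂ) * Complex.I) :=
  fourierCoeff_one_transf_general T f φ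
end

section
/- Let T > 0, let f : AddCircle T → ℂ be integrable with c₁(f) ≠ 0, let φₐ : ℝ, and let t' : ℝ. Define the shifted signal g : AddCircle T → ℂ by g(x) := f(x − ↑t'). Then c₁(g) ≠ 0 and there exists k : ℤ such that Δφ(g,φₐ) − Δφ(f,φₐ) = −t' + k·T; equivalently ↑(Δφ(g,φₐ)) = ↑(Δφ(f,φₐ) − t') in AddCircle T. That is, the computed phase-shift amounts of a signal and its t'-shifted variant differ by exactly −t' modulo the period T. -/
open MeasureTheory

/-! Shifting a signal by `t'` multiplies its first Fourier coefficient by the unimodular number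
`fourier (-1) t' = exp (-2πi t'/T)`, so `arg c₁` moves by `-2π t'/T` modulo `2π`. After scaling by
`2π/T`, `Δφ(f, φ)` is a representative of `arg c₁(f) - φ` modulo `2π`; hence `Δφ` moves by `-t'`
modulo `T`. -/

open Real

section
variable {T : ℝ}

theorem fourierCoeff_comp_sub [Fact (0 < T)] {E : Type*} [NormedAddCommGroup E] [NormedSpace ℂ E]
    (f : AddCircle T → E) (t : AddCircle T) (n : ℤ) :
    fourierCoeff (fun x => f (x - t)) n = fourier (-n) t • fourierCoeff f n := by
  simp only [fourierCoeff]
  rw [← integral_add_right_eq_self _ t, ← integral_smul]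
  congr 1 with x
  rw [add_sub_cancel_right, fourier_apply, fourier_apply, fourier_apply, zsmul_add,
    AddCircle.toCircle_add, Circle.coe_mul, mul_comm, mul_smul]

theorem fourierCoeff_comp_sub_ne_zero [Fact (0 < T)] {E : Type*} [NormedAddCommGroup E]
    [NormedSpace ℂ E] {f : AddCircle T → E} {n : ℤ}
    (hc : fourierCoeff f n ≠ 0) (t : AddCircle T) :
    fourierCoeff (fun x => f (x - t)) n ≠ 0 := by
  rw [fourierCoeff_comp_sub]
  exact smul_ne_zero (Circle.coe_ne_zero _) hc

theorem arg_fourier_coe_angle (n : ℤ) (x : ℝ) :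
    (Complex.arg (fourier n (x : AddCircle T)) : Angle) = (2 * π * n * x / T : ℝ) := by
  have hexp : 2 * π * Complex.I * n * x / T = ((2 * π * n * x / T : ℝ) : ℂ) * Complex.I := by
    push_cast
    ring
  rw [fourier_coe_apply, hexp, Complex.arg_exp_mul_I, Angle.coe_toIocMod]

theorem arg_fourierCoeff_comp_sub_coe_angle [Fact (0 < T)] {f : AddCircle T → ℂ} {n : ℤ}
    (hc : fourierCoeff f n ≠ 0) (t : ℝ) :
    (Complex.arg (fourierCoeff (fun x => f (x - (t : AddCircle T))) n) : Angle) =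
      Complex.arg (fourierCoeff f n) - (2 * π * n * t / T : ℝ) := by
  have hfourier : fourier (-n) (t : AddCircle T) ≠ 0 := Circle.coe_ne_zero _
  rw [fourierCoeff_comp_sub, smul_eq_mul, Complex.arg_mul_coe_angle hfourier hc,
    arg_fourier_coe_angle, Int.cast_neg, mul_neg, neg_mul, neg_div, Angle.coe_neg]
  abel

theorem coe_two_pi_div_mul_deltaPhi [Fact (0 < T)] (f : AddCircle T → ℂ) (φ : ℝ) :
    ((2 * π / T * deltaPhi T f φ : ℝ) : Angle) = (Complex.arg (fourierCoeff f 1) - φ : ℝ) := by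
  have hT : T ≠ 0 := (Fact.out : 0 < T).ne'
  rw [← Angle.coe_toIcoMod (Complex.arg _ - φ) 0, deltaPhi]
  change _ = ((theta T f φ : ℝ) : Angle)
  split_ifs
  · rw [show 2 * π / T * ((theta T f φ - 2 * π) * T / (2 * π)) = theta T f φ - 2 * π by
      field_simp, Angle.coe_sub, Angle.coe_two_pi, sub_zero]
  · congr 1
    field_simp

theorem coe_two_pi_div_mul_eq_iff (hT : T ≠ 0) {x y : ℝ} :
    ((2 * π / T * x : ℝ) : Angle) = (2 * π / T * y : ℝ) ↔ ∃ k : ℤ, x - y = k * T := by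
  rw [Angle.angle_eq_iff_two_pi_dvd_sub]
  refine exists_congr fun k => ?_
  rw [← mul_sub]
  constructor <;> intro h
  · field_simp at h
    linarith
  · rw [h]
    field_simp

end

theorem deltaPhi_shift_general (T : ℝ) [Fact (0 < T)] (f : AddCircle T → ℂ)
    (hc : fourierCoeff f 1 ≠ 0)
    (φₐ t' : ℝ) :
    fourierCoeff (fun x => f (x - (t' : AddCircle T))) 1 ≠ 0 ∧
    ∃ k : ℤ, deltaPhi T (fun x => f (x - (t' : AddCircle T))) φₐ - deltaPhi T f φₐ =
      -t' + (k : ℝ) * T := by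
  refine ⟨fourierCoeff_comp_sub_ne_zero hc t', ?_⟩
  have hT : T ≠ 0 := (Fact.out : 0 < T).ne'
  have hangle : ((2 * π / T * deltaPhi T (fun x => f (x - t')) φₐ : ℝ) : Angle) =
      (2 * π / T * (deltaPhi T f φₐ - t') : ℝ) := by
    rw [mul_sub, Angle.coe_sub, coe_two_pi_div_mul_deltaPhi, coe_two_pi_div_mul_deltaPhi,
      Angle.coe_sub, Angle.coe_sub, arg_fourierCoeff_comp_sub_coe_angle hc, Int.cast_one, mul_one,
      mul_div_right_comm]
    abel
  obtain ⟨k, hk⟩ := (coe_two_pi_div_mul_eq_iff hT).1 hangle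
  exact ⟨k, by linarith⟩

/-- The computed phase-shift amounts of a signal and of its `t'`-shifted variant differ
by exactly `−t'` modulo the period `T`. -/
theorem deltaPhi_shift (T : ℝ) [Fact (0 < T)] (f : AddCircle T → ℂ)
    (hf : Integrable f AddCircle.haarAddCircle) (hc : fourierCoeff f 1 ≠ 0)
    (φₐ t' : ℝ) :
    fourierCoeff (fun x => f (x - (t' : AddCircle T))) 1 ≠ 0 ∧
    ∃ k : ℤ, deltaPhi T (fun x => f (x - (t' : AddCircle T))) φₐ - deltaPhi T f φₐ =
      -t' + (k : ℝ) * T :=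
  deltaPhi_shift_general T f hc φₐ t'
end
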